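/- Let (B_t)_{t≥0} be a standard Brownian motion, let ε > 0, and let c ∈ (0, 1/6] be such that ℓ(t)/ℓ(2t) ≤ 1 + ε for all t ∈ (0, c). For T > 0 define S_{T,c} = sup_{0 ≤ s < t ≤ T, t − s < c} |B_t − B_s| / ω_{1/2}(t − s). Then for every x > 0, P(S_{2,c} > (1+ε)^{1/2} x) ≤ P(S_{1,c} > x). -/

import Mathlib

open MeasureTheory ProbabilityTheory
open scoped ENNReal

/-- `ℓ(t) = -log t` for `0 < t ≤ 1/3` and `ℓ(t) = log 3` for `t ≥ 1/3`. -/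
noncomputable def ell (t : ℝ) : ℝ := if t ≤ 1/3 then -Real.log t else Real.log 3

/-- `ω_q(t) = (t ℓ(t))^q` for `t > 0` and `ω_q(0) = 0`. -/
noncomputable def omegaQ (q t : ℝ) : ℝ := if t = 0 then 0 else (t * ell t) ^ q

/-- `B` is a standard Brownian motion on the probability space `(Ω, P)`. -/
def IsStdBM {Ω : Type*} [MeasurableSpace Ω] (P : Measure Ω) (B : ℝ → Ω → ℝ) : Prop :=
  (∀ t : ℝ, Measurable (B t)) ∧
  (∀ᵐ ω ∂P, ContinuousOn (fun t => B t ω) (Set.Ici (0:ℝ))) ∧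
  (∀ᵐ ω ∂P, B 0 ω = 0) ∧
  (∀ s t : ℝ, 0 ≤ s → s ≤ t →
    Measure.map (fun ω => B t ω - B s ω) P = gaussianReal 0 (Real.toNNReal (t - s))) ∧
  (∀ u : ℕ → ℝ, (∀ i, 0 ≤ u i) → Monotone u →
    iIndepFun (fun i ω => B (u (i+1)) ω - B (u i) ω) P)

/-- `S_{T,c}(ω) = sup_{0 ≤ s < t ≤ T, t - s < c} |B_t(ω) - B_s(ω)| / ω_{1/2}(t-s)`,
regarded as a `[0,∞]`-valued random variable. -/
noncomputable def Sbm {Ω : Type*} (B : ℝ → Ω → ℝ) (T c : ℝ) (ω : Ω) : ℝ≥0∞ :=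
  ⨆ (s : ℝ) (t : ℝ) (_ : 0 ≤ s) (_ : s < t) (_ : t ≤ T) (_ : t - s < c),
    ENNReal.ofReal (|B t ω - B s ω| / omegaQ (1/2) (t - s))

/-!
Brownian scaling: `t ↦ B_{2t}/√2` is again a standard Brownian motion, and the hypothesis on `ℓ`
gives `√2 ω_{1/2}(u) ≤ √(1+ε) ω_{1/2}(2u)`, so pathwise `S_{2,c}(B) ≤ √(1+ε) S_{1,c}(B_{2·}/√2)`.
For continuous paths `S_{T,c}` is a supremum over rational times, hence a measurable function of
the path, so its law is determined by the finite-dimensional distributions, which are the same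
for every standard Brownian motion.
-/

open Set Topology
open scoped NNReal

lemma ell_eq_max {t : ℝ} (ht : 0 < t) : ell t = max (-Real.log t) (Real.log 3) := by
  have hlog3 : Real.log (1/3) = -Real.log 3 := by rw [one_div, Real.log_inv]
  unfold ell
  split_ifs with h
  · have := Real.log_le_log ht h
    exact (max_eq_left (by linarith)).symm
  · have := Real.log_lt_log (by norm_num) (not_le.mp h)
    exact (max_eq_right (by linarith)).symm

lemma ell_pos {t : ℝ} (ht : 0 < t) : 0 < ell t := by
  rw [ell_eq_max ht]
  exact lt_max_of_lt_right (Real.log_pos (by norm_num))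

lemma continuousAt_ell {t : ℝ} (ht : 0 < t) : ContinuousAt ell t := by
  have h : (fun s => max (-Real.log s) (Real.log 3)) =ᶠ[𝓝 t] ell :=
    (eventually_gt_nhds ht).mono fun s hs => (ell_eq_max hs).symm
  exact ContinuousAt.congr ((Real.continuousAt_log ht.ne').neg.max continuousAt_const) h

lemma omegaQ_of_ne_zero (q : ℝ) {t : ℝ} (ht : t ≠ 0) : omegaQ q t = (t * ell t) ^ q := if_neg ht

lemma omegaQ_pos (q : ℝ) {t : ℝ} (ht : 0 < t) : 0 < omegaQ q t := by
  rw [omegaQ_of_ne_zero q ht.ne']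
  exact Real.rpow_pos_of_pos (mul_pos ht (ell_pos ht)) q

lemma continuousAt_omegaQ (q : ℝ) {t : ℝ} (ht : 0 < t) : ContinuousAt (omegaQ q) t := by
  have h : (fun s => (s * ell s) ^ q) =ᶠ[𝓝 t] omegaQ q :=
    (eventually_ne_nhds ht.ne').mono fun s hs => (omegaQ_of_ne_zero q hs).symm
  exact ContinuousAt.congr ((continuousAt_id.mul (continuousAt_ell ht)).rpow_const
    (Or.inl (mul_pos ht (ell_pos ht)).ne')) h

lemma omegaQ_half_eq_sqrt {t : ℝ} (ht : t ≠ 0) : omegaQ (1/2) t = √(t * ell t) := by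
  rw [omegaQ_of_ne_zero _ ht, Real.sqrt_eq_rpow]

lemma sqrt_two_mul_omegaQ_half_le {u k : ℝ} (hu : 0 < u) (h : ell u ≤ k * ell (2 * u)) :
    √2 * omegaQ (1/2) u ≤ √k * omegaQ (1/2) (2 * u) := by
  have h2u : 0 < 2 * u := by positivity
  rw [omegaQ_half_eq_sqrt hu.ne', omegaQ_half_eq_sqrt h2u.ne', ← Real.sqrt_mul zero_le_two,
    ← Real.sqrt_mul' k (mul_pos h2u (ell_pos h2u)).le]
  apply Real.sqrt_le_sqrt
  nlinarith [mul_le_mul_of_nonneg_left h h2u.le]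

noncomputable def incrRatio (f : ℝ → ℝ) (s t : ℝ) : ℝ≥0∞ :=
  ENNReal.ofReal (|f t - f s| / omegaQ (1/2) (t - s))

lemma incrRatio_le_sqrt_mul_incrRatio_time_scale (f : ℝ → ℝ) {s t k : ℝ} (hst : s < t)
    (hω : √2 * omegaQ (1/2) ((t - s) / 2) ≤ √k * omegaQ (1/2) (t - s)) :
    incrRatio f s t ≤
      ENNReal.ofReal √k * incrRatio (fun r => (√2)⁻¹ * f (2 * r)) (s / 2) (t / 2) := by
  have hu : 0 < (t - s) / 2 := by linarith
  have hw := omegaQ_pos (1/2) hu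
  have hw2 := omegaQ_pos (1/2) (sub_pos.2 hst)
  have hincr : |(√2)⁻¹ * f (2 * (t / 2)) - (√2)⁻¹ * f (2 * (s / 2))| = (√2)⁻¹ * |f t - f s| := by
    rw [← mul_sub, abs_mul, abs_of_pos (by positivity), mul_div_cancel₀ _ two_ne_zero,
      mul_div_cancel₀ _ two_ne_zero]
  rw [incrRatio, incrRatio, ← ENNReal.ofReal_mul (Real.sqrt_nonneg _), hincr,
    show t / 2 - s / 2 = (t - s) / 2 by ring]
  refine ENNReal.ofReal_le_ofReal ?_
  calc |f t - f s| / omegaQ (1/2) (t - s)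
      = |f t - f s| * (√2 * omegaQ (1/2) ((t - s) / 2)) /
          ((√2 * omegaQ (1/2) ((t - s) / 2)) * omegaQ (1/2) (t - s)) := by field_simp
    _ ≤ |f t - f s| * (√k * omegaQ (1/2) (t - s)) /
          ((√2 * omegaQ (1/2) ((t - s) / 2)) * omegaQ (1/2) (t - s)) := by gcongr
    _ = √k * ((√2)⁻¹ * |f t - f s| / omegaQ (1/2) ((t - s) / 2)) := by field_simp

lemma Sbm_two_mul_le {Ω : Type*} (B : ℝ → Ω → ℝ) {T c k : ℝ}
    (hℓ : ∀ t ∈ Ioo 0 c, ell t / ell (2 * t) ≤ k) (ω : Ω) :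
    Sbm B (2 * T) c ω ≤ ENNReal.ofReal √k * Sbm (fun t ω => (√2)⁻¹ * B (2 * t) ω) T c ω := by
  refine iSup_le fun s => iSup_le fun t => iSup_le fun hs => iSup_le fun hst =>
    iSup_le fun htT => iSup_le fun htc => ?_
  have hu : 0 < (t - s) / 2 := by linarith
  have hω := sqrt_two_mul_omegaQ_half_le hu <|
    (div_le_iff₀ (ell_pos (by linarith))).1 (hℓ _ ⟨hu, by linarith⟩)
  rw [show 2 * ((t - s) / 2) = t - s by ring] at hω
  refine (incrRatio_le_sqrt_mul_incrRatio_time_scale (B · ω) hst hω).trans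
    (mul_le_mul_right ?_ _)
  exact le_iSup_of_le (s / 2) <| le_iSup_of_le (t / 2) <| le_iSup_of_le (by linarith) <|
    le_iSup_of_le (by linarith) <| le_iSup_of_le (by linarith) <|
    le_iSup_of_le (by linarith) le_rfl

/-- `Sbm` with the supremum restricted to rational times, as a functional of the path on `ℝ≥0`:
unlike `Sbm`, it is measurable for the product σ-algebra on paths. -/
noncomputable def ratSbm (T c : ℝ) (f : ℝ≥0 → ℝ) : ℝ≥0∞ :=
  ⨆ (p : ℚ) (q : ℚ) (_ : 0 ≤ p) (_ : p < q) (_ : (q : ℝ) ≤ T) (_ : (q : ℝ) - p < c),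
    incrRatio (fun t => f t.toNNReal) p q

lemma measurable_ratSbm (T c : ℝ) : Measurable (ratSbm T c) := by
  unfold ratSbm incrRatio
  fun_prop

lemma mem_closure_ratPairs_between {s t : ℝ} (hst : s < t) :
    (s, t) ∈ closure {z ∈ range (Prod.map ((↑) : ℚ → ℝ) ((↑) : ℚ → ℝ)) |
      s < z.1 ∧ z.1 < z.2 ∧ z.2 < t} := by
  obtain ⟨m, hsm, hmt⟩ := exists_between hst
  have hO : IsOpen (Ioo s m ×ˢ Ioo m t) := isOpen_Ioo.prod isOpen_Ioo
  have hst_mem : (s, t) ∈ closure (Ioo s m ×ˢ Ioo m t) := by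
    rw [closure_prod_eq, closure_Ioo hsm.ne, closure_Ioo hmt.ne]
    exact ⟨⟨le_rfl, hsm.le⟩, ⟨hmt.le, le_rfl⟩⟩
  have hdense := (Rat.denseRange_cast (𝕜 := ℝ)).prodMap (Rat.denseRange_cast (𝕜 := ℝ))
  refine closure_mono ?_ (closure_minimal (hdense.open_subset_closure_inter hO) isClosed_closure
    hst_mem)
  rintro z ⟨⟨⟨hsz, hzm⟩, hmz, hzt⟩, hz⟩
  exact ⟨hz, hsz, hzm.trans hmz, hzt⟩

lemma continuousWithinAt_incrRatio {f : ℝ → ℝ} (hf : ContinuousOn f (Ici 0)) {s t : ℝ}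
    (hs : 0 ≤ s) (hst : s < t) :
    ContinuousWithinAt (fun z : ℝ × ℝ => incrRatio f z.1 z.2) (Ici 0 ×ˢ Ici 0) (s, t) := by
  have hfs : ContinuousWithinAt (fun z : ℝ × ℝ => f z.1) (Ici 0 ×ˢ Ici 0) (s, t) :=
    (hf s hs).comp continuousWithinAt_fst fun z hz => hz.1
  have hft : ContinuousWithinAt (fun z : ℝ × ℝ => f z.2) (Ici 0 ×ˢ Ici 0) (s, t) :=
    (hf t (hs.trans hst.le)).comp continuousWithinAt_snd fun z hz => hz.2
  have hω : ContinuousAt (fun z : ℝ × ℝ => omegaQ (1/2) (z.2 - z.1)) (s, t) :=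
    (continuousAt_omegaQ _ (sub_pos.2 hst)).comp_of_eq (by fun_prop) rfl
  exact ENNReal.continuous_ofReal.continuousAt.comp_continuousWithinAt
    ((hft.sub hfs).abs.div hω.continuousWithinAt (omegaQ_pos _ (sub_pos.2 hst)).ne')

lemma incrRatio_le_ratSbm {f : ℝ → ℝ} (hf : ContinuousOn f (Ici 0)) {T c s t : ℝ}
    (hs : 0 ≤ s) (hst : s < t) (htT : t ≤ T) (htc : t - s < c) :
    incrRatio f s t ≤ ratSbm T c (fun u : ℝ≥0 => f u) := by
  set D := {z ∈ range (Prod.map ((↑) : ℚ → ℝ) ((↑) : ℚ → ℝ)) | s < z.1 ∧ z.1 < z.2 ∧ z.2 < t}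
  have hD : D ⊆ Ici 0 ×ˢ Ici 0 := fun z hz =>
    ⟨hs.trans hz.2.1.le, hs.trans (hz.2.1.trans hz.2.2.1).le⟩
  have hbound : ∀ z ∈ D, incrRatio f z.1 z.2 ≤ ratSbm T c (fun u : ℝ≥0 => f u) := by
    rintro _ ⟨⟨⟨p, q⟩, rfl⟩, hsp, hpq, hqt⟩
    simp only [Prod.map] at hsp hpq hqt ⊢
    have hp : (0 : ℝ) ≤ p := hs.trans hsp.le
    have hq : (0 : ℝ) ≤ q := hp.trans hpq.le
    have hterm : incrRatio (fun r => f (r.toNNReal : ℝ)) p q = incrRatio f p q := by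
      simp only [incrRatio, Real.coe_toNNReal _ hp, Real.coe_toNNReal _ hq]
    rw [← hterm]
    exact le_iSup_of_le p <| le_iSup_of_le q <| le_iSup_of_le (by exact_mod_cast hp) <|
      le_iSup_of_le (by exact_mod_cast hpq) <| le_iSup_of_le (by linarith) <|
      le_iSup_of_le (by linarith) le_rfl
  have hmem := ((continuousWithinAt_incrRatio hf hs hst).mono hD).mem_closure_image
    (mem_closure_ratPairs_between hst)
  exact closure_minimal (image_subset_iff.2 hbound) isClosed_Iic hmem

lemma Sbm_eq_ratSbm {Ω : Type*} {B : ℝ → Ω → ℝ} {T c : ℝ} {ω : Ω}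
    (hω : ContinuousOn (B · ω) (Ici 0)) :
    Sbm B T c ω = ratSbm T c (fun t : ℝ≥0 => B t ω) := by
  refine le_antisymm ?_ ?_
  · exact iSup_le fun s => iSup_le fun t => iSup_le fun hs => iSup_le fun hst =>
      iSup_le fun htT => iSup_le fun htc => incrRatio_le_ratSbm hω hs hst htT htc
  · refine iSup_le fun p => iSup_le fun q => iSup_le fun hp => iSup_le fun hpq =>
      iSup_le fun hqT => iSup_le fun hqc => ?_
    have hp' : (0 : ℝ) ≤ p := by exact_mod_cast hp
    have hq' : (0 : ℝ) ≤ q := by exact_mod_cast hp.trans hpq.le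
    simp only [incrRatio, Real.coe_toNNReal _ hp', Real.coe_toNNReal _ hq']
    exact le_iSup_of_le (p : ℝ) <| le_iSup_of_le (q : ℝ) <| le_iSup_of_le hp' <|
      le_iSup_of_le (by exact_mod_cast hpq) <| le_iSup_of_le hqT <| le_iSup_of_le hqc le_rfl

section Brownian

variable {Ω : Type*} [MeasurableSpace Ω] {P : Measure Ω} {B : ℝ → Ω → ℝ}

lemma IsStdBM.isPreBrownianReal (hB : IsStdBM P B) :
    IsPreBrownianReal (fun t : ℝ≥0 => B t) P := by
  obtain ⟨hm, -, h0, hgauss, hindep⟩ := hB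
  refine HasIndepIncrements.isPreBrownianReal_of_hasLaw (fun t => ?_) ?_
  · have hlaw : HasLaw (fun ω => B t ω - B 0 ω) (gaussianReal 0 t) P :=
      ⟨((hm _).sub (hm _)).aemeasurable, by simpa using hgauss 0 t le_rfl t.2⟩
    exact hlaw.congr (by filter_upwards [h0] with ω hω; simp [hω])
  · rw [hasIndepIncrements_iff_nat]
    exact fun u hu => hindep (fun i => u i) (fun i => (u i).2) (NNReal.coe_mono.comp hu)

lemma IsStdBM.of_isPreBrownianReal (hm : ∀ t, Measurable (B t))
    (hc : ∀ᵐ ω ∂P, ContinuousOn (B · ω) (Ici 0))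
    (hX : IsPreBrownianReal (fun t : ℝ≥0 => B t) P) : IsStdBM P B := by
  refine ⟨hm, hc, by simpa using hX.eval_zero_ae_eq_zero, fun s t hs hst => ?_,
    fun u hu hmono => ?_⟩
  · have hlaw := (hX.hasLaw_sub t.toNNReal s.toNNReal).map_eq
    simp only [NNReal.val_eq_coe, Real.coe_toNNReal _ hs, Real.coe_toNNReal _ (hs.trans hst),
      Real.nndist_eq, Real.nnabs_of_nonneg (sub_nonneg.2 hst)] at hlaw
    exact hlaw
  · simpa [Real.coe_toNNReal _ (hu _)] using hX.hasIndepIncrements.nat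
      (t := fun i => (u i).toNNReal) fun i j hij => Real.toNNReal_le_toNNReal (hmono hij)

lemma IsStdBM.time_scale (hB : IsStdBM P B) {a : ℝ} (ha : 0 < a) :
    IsStdBM P (fun t ω => (√a)⁻¹ * B (a * t) ω) := by
  refine .of_isPreBrownianReal (fun t => (hB.1 _).const_mul _) ?_ ?_
  · filter_upwards [hB.2.1] with ω hω
    exact continuousOn_const.mul (hω.comp (continuousOn_const.mul continuousOn_id)
      fun t ht => mem_Ici.2 (mul_nonneg ha.le ht))
  · simpa [Real.coe_toNNReal _ ha.le] using
      hB.isPreBrownianReal.smul (c := a.toNNReal) (by simpa using ha)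

lemma IsStdBM.identDistrib_path {B' : ℝ → Ω → ℝ} (hB : IsStdBM P B) (hB' : IsStdBM P B') :
    IdentDistrib (fun ω (t : ℝ≥0) => B t ω) (fun ω (t : ℝ≥0) => B' t ω) P P := by
  have := hB.isPreBrownianReal.isGaussianProcess.isProbabilityMeasure
  have hm : Measurable (fun ω (t : ℝ≥0) => B t ω) := measurable_pi_lambda _ fun t => hB.1 t
  have hm' : Measurable (fun ω (t : ℝ≥0) => B' t ω) := measurable_pi_lambda _ fun t => hB'.1 t
  refine ⟨hm.aemeasurable, hm'.aemeasurable, ?_⟩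
  rw [map_eq_iff_forall_finset_map_restrict_eq hm.aemeasurable hm'.aemeasurable]
  exact fun I => (hB.isPreBrownianReal.hasLaw I).map_eq.trans
    (hB'.isPreBrownianReal.hasLaw I).map_eq.symm

lemma IsStdBM.Sbm_ae_eq_ratSbm (hB : IsStdBM P B) (T c : ℝ) :
    Sbm B T c =ᵐ[P] ratSbm T c ∘ fun ω (t : ℝ≥0) => B t ω := by
  filter_upwards [hB.2.1] with ω hω using Sbm_eq_ratSbm hω

lemma IsStdBM.identDistrib_Sbm {B' : ℝ → Ω → ℝ} (hB : IsStdBM P B) (hB' : IsStdBM P B')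
    (T c : ℝ) : IdentDistrib (Sbm B T c) (Sbm B' T c) P P := by
  have hrat := (hB.identDistrib_path hB').comp (measurable_ratSbm T c)
  exact ((IdentDistrib.of_ae_eq (hrat.aemeasurable_fst.congr (hB.Sbm_ae_eq_ratSbm T c).symm)
    (hB.Sbm_ae_eq_ratSbm T c)).trans hrat).trans
    (IdentDistrib.of_ae_eq (hrat.aemeasurable_snd.congr (hB'.Sbm_ae_eq_ratSbm T c).symm)
      (hB'.Sbm_ae_eq_ratSbm T c)).symm

end Brownian

theorem Sbm_scaling_tail_bound_general {Ω : Type*} [MeasurableSpace Ω] (P : Measure Ω)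
    (B : ℝ → Ω → ℝ) (hB : IsStdBM P B)
    (ε : ℝ) (c : ℝ)
    (hℓ : ∀ t ∈ Set.Ioo (0:ℝ) c, ell t / ell (2*t) ≤ 1 + ε)
    (x : ℝ) :
    P {ω | Sbm B 2 c ω > ENNReal.ofReal ((1+ε) ^ ((1:ℝ)/2) * x)}
      ≤ P {ω | Sbm B 1 c ω > ENNReal.ofReal x} := by
  set B₂ := fun t ω => (√2)⁻¹ * B (2 * t) ω
  calc P {ω | Sbm B 2 c ω > ENNReal.ofReal ((1+ε) ^ ((1:ℝ)/2) * x)}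
      ≤ P {ω | Sbm B₂ 1 c ω > ENNReal.ofReal x} := by
        refine measure_mono <| ofPred_subset_ofPred.2 fun ω hω =>
          lt_of_not_ge fun hle => hω.not_ge ?_
        calc Sbm B 2 c ω ≤ ENNReal.ofReal √(1 + ε) * Sbm B₂ 1 c ω := by
              simpa using Sbm_two_mul_le B (T := 1) hℓ ω
          _ ≤ ENNReal.ofReal √(1 + ε) * ENNReal.ofReal x := mul_le_mul_right hle _
          _ = ENNReal.ofReal ((1+ε) ^ ((1:ℝ)/2) * x) := by
              rw [← ENNReal.ofReal_mul (Real.sqrt_nonneg _), Real.sqrt_eq_rpow]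
    _ = P {ω | Sbm B 1 c ω > ENNReal.ofReal x} :=
        ((hB.time_scale two_pos).identDistrib_Sbm hB 1 c).measure_mem_eq measurableSet_Ioi

/-- for a standard Brownian motion `B`, `ε > 0` and `c ∈ (0,1/6]` with
`ℓ(t)/ℓ(2t) ≤ 1 + ε` on `(0,c)`, one has
`P(S_{2,c} > (1+ε)^{1/2} x) ≤ P(S_{1,c} > x)` for all `x > 0`. -/
theorem Sbm_scaling_tail_bound {Ω : Type*} [MeasurableSpace Ω] (P : Measure Ω)
    [IsProbabilityMeasure P] (B : ℝ → Ω → ℝ) (hB : IsStdBM P B)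
    (ε : ℝ) (hε : 0 < ε) (c : ℝ) (hc : c ∈ Set.Ioc (0:ℝ) (1/6))
    (hℓ : ∀ t ∈ Set.Ioo (0:ℝ) c, ell t / ell (2*t) ≤ 1 + ε)
    (x : ℝ) (hx : 0 < x) :
    P {ω | Sbm B 2 c ω > ENNReal.ofReal ((1+ε) ^ ((1:ℝ)/2) * x)}
      ≤ P {ω | Sbm B 1 c ω > ENNReal.ofReal x} :=
  Sbm_scaling_tail_bound_general P B hB ε c hℓ x
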